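/- arXiv:math/0703567 — 5 statements merged into one kernel-verified Lean document; each statement's English description precedes it below -/
import Mathlib

section
/- Let Λ be a finite-dimensional ℚ-vector subspace of ℝ² containing two vectors that are linearly independent over ℝ. Then the multiplicative field k = {λ ∈ ℝ : λΛ ⊆ Λ} is an algebraic number field whose degree over ℚ is at most dim_ℚ(Λ)/2. -/
/-- The multiplicative field of a finite-dimensional ℚ-subspace Λ ⊆ ℝ² containing two
ℝ-linearly independent vectors consists of algebraic numbers, and its degree over ℚ
is at most half the ℚ-dimension of Λ. -/
theorem stmt0 (Λ : Submodule ℚ (ℝ × ℝ)) (hfin : FiniteDimensional ℚ Λ)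
    (v₁ v₂ : ℝ × ℝ) (h1 : v₁ ∈ Λ) (h2 : v₂ ∈ Λ)
    (hli : LinearIndependent ℝ ![v₁, v₂]) :
    (∀ l ∈ {l : ℝ | ∀ v ∈ Λ, l • v ∈ Λ}, IsAlgebraic ℚ l) ∧
    2 * Module.finrank ℚ (Submodule.span ℚ {l : ℝ | ∀ v ∈ Λ, l • v ∈ Λ})
      ≤ Module.finrank ℚ Λ := by
  have hpair := LinearIndependent.pair_iff.mp hli
  have hv₁ : v₁ ≠ 0 := by
    intro h
    obtain ⟨hs, -⟩ := hpair 1 0 (by simp [h])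
    exact one_ne_zero hs
  have hΛne : Λ ≠ ⊥ := by
    intro h
    exact hv₁ (by simpa [h] using h1)
  have hΛfg : Λ.FG := (Submodule.fg_top Λ).mp (Module.finite_def.mp hfin)
  constructor
  · intro l hl
    exact (isIntegral_of_smul_mem_submodule Λ hΛne hΛfg l hl).isAlgebraic
  · set S := {l : ℝ | ∀ v ∈ Λ, l • v ∈ Λ} with hSdef
    set K := Submodule.span ℚ S with hKdef
    -- every element of K multiplies Λ into Λ
    have key : ∀ a ∈ K, ∀ w ∈ Λ, a • w ∈ Λ := by
      intro a ha
      induction ha using Submodule.span_induction with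
      | mem s hs => exact hs
      | zero => intro w hw; simp only [zero_smul]; exact Λ.zero_mem
      | add a b _ _ ha hb => intro w hw; rw [add_smul]; exact Λ.add_mem (ha w hw) (hb w hw)
      | smul q a _ ha => intro w hw; rw [smul_assoc]; exact Λ.smul_mem q (ha w hw)
    -- the linear map (a, b) ↦ a • v₁ + b • v₂ from K × K into Λ
    let f₁ : ℝ →ₗ[ℚ] ℝ × ℝ := (LinearMap.toSpanSingleton ℝ (ℝ × ℝ) v₁).restrictScalars ℚ
    let f₂ : ℝ →ₗ[ℚ] ℝ × ℝ := (LinearMap.toSpanSingleton ℝ (ℝ × ℝ) v₂).restrictScalars ℚ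
    let F : ℝ × ℝ →ₗ[ℚ] ℝ × ℝ := f₁.coprod f₂
    let j : (K × K) →ₗ[ℚ] ℝ × ℝ := K.subtype.prodMap K.subtype
    have hmem : ∀ p : K × K, F (j p) ∈ Λ := by
      rintro ⟨⟨a, ha⟩, ⟨b, hb⟩⟩
      exact Λ.add_mem (key a ha v₁ h1) (key b hb v₂ h2)
    let G : (K × K) →ₗ[ℚ] Λ := (F.comp j).codRestrict Λ hmem
    have hGinj : Function.Injective G := by
      rintro ⟨⟨a, ha⟩, ⟨b, hb⟩⟩ ⟨⟨c, hc⟩, ⟨d, hd⟩⟩ h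
      have h' : a • v₁ + b • v₂ = c • v₁ + d • v₂ := congrArg Subtype.val h
      have h'' : (a - c) • v₁ + (b - d) • v₂ = 0 := by
        rw [sub_smul, sub_smul]
        linear_combination (norm := module) h'
      obtain ⟨e1, e2⟩ := hpair _ _ h''
      have hac : a = c := sub_eq_zero.mp e1
      have hbd : b = d := sub_eq_zero.mp e2
      simp only [Prod.mk.injEq, Subtype.mk.injEq]
      exact ⟨hac, hbd⟩
    haveI : FiniteDimensional ℚ (K × K) := FiniteDimensional.of_injective G hGinj
    haveI : FiniteDimensional ℚ K :=
      FiniteDimensional.of_injective (G.comp (LinearMap.inl ℚ K K))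
        (hGinj.comp LinearMap.inl_injective)
    calc 2 * Module.finrank ℚ K = Module.finrank ℚ (K × K) := by
          rw [Module.finrank_prod, two_mul]
      _ ≤ Module.finrank ℚ Λ := LinearMap.finrank_le_finrank_of_injective hGinj
end

section
/- Let Λ be a finite-dimensional ℚ-vector subspace of ℝ² and let k be its multiplicative field. Call a line ℓ through the origin in ℝ² maximal if dim_ℚ(Λ ∩ ℓ) ≥ dim_ℚ(Λ)/2. If the lines of slope 0, 1, and ∞ (the x-axis, the diagonal, and the y-axis) are maximal, then there is a finite-dimensional k-vector subspace Γ ⊆ ℝ such that Λ = {(x,y) : x,y ∈ Γ}, and the maximal lines are exactly those with slope in k ∪ {∞}. -/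
open Submodule Module

private lemma mem_span_slope (m : ℝ) (p : ℝ × ℝ) :
    p ∈ Submodule.span ℝ {((1 : ℝ), m)} ↔ p.2 = m * p.1 := by
  rw [Submodule.mem_span_singleton]
  constructor
  · rintro ⟨c, rfl⟩; simp [mul_comm]
  · intro h
    exact ⟨p.1, by ext <;> simp [h, mul_comm]⟩

private lemma mem_span_vert (p : ℝ × ℝ) :
    p ∈ Submodule.span ℝ {((0 : ℝ), (1 : ℝ))} ↔ p.1 = 0 := by
  rw [Submodule.mem_span_singleton]
  constructor
  · rintro ⟨c, rfl⟩; simp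
  · intro h
    exact ⟨p.2, by ext <;> simp [h]⟩

noncomputable def fslope (m : ℝ) : ℝ →ₗ[ℚ] ℝ × ℝ :=
  (LinearMap.id : ℝ →ₗ[ℚ] ℝ).prod (LinearMap.mulLeft ℚ m)

lemma fslope_apply (m x : ℝ) : fslope m x = (x, m * x) := rfl

lemma fslope_inj (m : ℝ) : Function.Injective (fslope m) :=
  fun _ _ h => congrArg Prod.fst h

lemma inter_slope_eq (Λ : Submodule ℚ (ℝ × ℝ)) (m : ℝ) :
    Λ ⊓ (Submodule.span ℝ {((1 : ℝ), m)}).restrictScalars ℚ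
      = Submodule.map (fslope m) (Submodule.comap (fslope m) Λ) := by
  ext p
  simp only [Submodule.mem_inf, Submodule.restrictScalars_mem, mem_span_slope,
    Submodule.mem_map, Submodule.mem_comap, fslope_apply]
  constructor
  · rintro ⟨hp, h2⟩
    exact ⟨p.1, by rwa [← h2, Prod.mk.eta], by rw [← h2, Prod.mk.eta]⟩
  · rintro ⟨x, hx, rfl⟩
    exact ⟨hx, rfl⟩

lemma inter_vert_eq (Λ : Submodule ℚ (ℝ × ℝ)) :
    Λ ⊓ (Submodule.span ℝ {((0 : ℝ), (1 : ℝ))}).restrictScalars ℚ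
      = Submodule.map (LinearMap.inr ℚ ℝ ℝ) (Submodule.comap (LinearMap.inr ℚ ℝ ℝ) Λ) := by
  ext p
  simp only [Submodule.mem_inf, Submodule.restrictScalars_mem, mem_span_vert,
    Submodule.mem_map, Submodule.mem_comap, LinearMap.coe_inr]
  constructor
  · rintro ⟨hp, h1⟩
    exact ⟨p.2, by rwa [show ((0:ℝ), p.2) = p by ext <;> simp [h1.symm]],
      by ext <;> simp [h1.symm]⟩
  · rintro ⟨x, hx, rfl⟩
    exact ⟨hx, rfl⟩

/-- If the lines of slope 0, 1, ∞ are maximal for a finite-dimensional ℚ-subspace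
Λ ⊆ ℝ², then Λ = Γ × Γ for a finite-dimensional vector space Γ over the
multiplicative field k, and the maximal lines are exactly those with slope in k ∪ {∞}. -/
theorem stmt1 (Λ : Submodule ℚ (ℝ × ℝ)) (hfin : FiniteDimensional ℚ Λ)
    (v₁ v₂ : ℝ × ℝ) (h1 : v₁ ∈ Λ) (h2 : v₂ ∈ Λ)
    (hli : LinearIndependent ℝ ![v₁, v₂])
    (maximal : Submodule ℝ (ℝ × ℝ) → Prop)
    (hmaximal : ∀ ℓ, maximal ℓ ↔
      Module.finrank ℚ Λ ≤ 2 * Module.finrank ℚ (Λ ⊓ ℓ.restrictScalars ℚ : Submodule ℚ (ℝ × ℝ)))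
    (hx : maximal (Submodule.span ℝ {((1 : ℝ), (0 : ℝ))}))
    (hdiag : maximal (Submodule.span ℝ {((1 : ℝ), (1 : ℝ))}))
    (hy : maximal (Submodule.span ℝ {((0 : ℝ), (1 : ℝ))})) :
    ∃ Γ : Submodule ℚ ℝ, FiniteDimensional ℚ Γ ∧
      (∀ l ∈ {l : ℝ | ∀ v ∈ Λ, l • v ∈ Λ}, ∀ x ∈ Γ, l * x ∈ Γ) ∧
      (∀ p : ℝ × ℝ, p ∈ Λ ↔ p.1 ∈ Γ ∧ p.2 ∈ Γ) ∧
      (∀ ℓ : Submodule ℝ (ℝ × ℝ), Module.finrank ℝ ℓ = 1 →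
        (maximal ℓ ↔ (ℓ = Submodule.span ℝ {((0 : ℝ), (1 : ℝ))} ∨
          ∃ m ∈ {l : ℝ | ∀ v ∈ Λ, l • v ∈ Λ}, ℓ = Submodule.span ℝ {((1 : ℝ), m)}))) := by
  classical
  set n := Module.finrank ℚ Λ with hn
  set E : ℝ → Submodule ℚ ℝ := fun m => Submodule.comap (fslope m) Λ with hE
  have hEmem : ∀ m x, x ∈ E m ↔ (x, m * x) ∈ Λ := fun m x => Iff.rfl
  have hmapleE : ∀ m, Submodule.map (fslope m) (E m) ≤ Λ := by
    intro m p hp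
    obtain ⟨x, hx', rfl⟩ := hp
    exact hx'
  have hEfin : ∀ m, FiniteDimensional ℚ (E m) := by
    intro m
    haveI : FiniteDimensional ℚ (Submodule.map (fslope m) (E m)) :=
      Submodule.finiteDimensional_of_le (hmapleE m)
    exact (Submodule.equivMapOfInjective _ (fslope_inj m) (E m)).symm.finiteDimensional
  have hEfr : ∀ m, Module.finrank ℚ (Λ ⊓ (Submodule.span ℝ {((1 : ℝ), m)}).restrictScalars ℚ :
      Submodule ℚ (ℝ × ℝ)) = Module.finrank ℚ (E m) := by
    intro m
    rw [inter_slope_eq]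
    exact ((Submodule.equivMapOfInjective _ (fslope_inj m) (E m)).symm.finrank_eq)
  set Γ₂ : Submodule ℚ ℝ := Submodule.comap (LinearMap.inr ℚ ℝ ℝ) Λ with hΓ₂
  have hinrinj : Function.Injective (LinearMap.inr ℚ ℝ ℝ) := LinearMap.inr_injective
  have hinlinj : Function.Injective (LinearMap.inl ℚ ℝ ℝ) := LinearMap.inl_injective
  have hΓ₂mem : ∀ x, x ∈ Γ₂ ↔ ((0 : ℝ), x) ∈ Λ := fun x => Iff.rfl
  have hmapleΓ₂ : Submodule.map (LinearMap.inr ℚ ℝ ℝ) Γ₂ ≤ Λ := by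
    rintro p ⟨x, hx', rfl⟩; exact hx'
  have hΓ₂fin : FiniteDimensional ℚ Γ₂ := by
    haveI : FiniteDimensional ℚ (Submodule.map (LinearMap.inr ℚ ℝ ℝ) Γ₂) :=
      Submodule.finiteDimensional_of_le hmapleΓ₂
    exact (Submodule.equivMapOfInjective _ hinrinj Γ₂).symm.finiteDimensional
  have hΓ₂fr : Module.finrank ℚ (Λ ⊓ (Submodule.span ℝ {((0 : ℝ), (1:ℝ))}).restrictScalars ℚ :
      Submodule ℚ (ℝ × ℝ)) = Module.finrank ℚ Γ₂ := by
    rw [inter_vert_eq]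
    exact ((Submodule.equivMapOfInjective _ hinrinj Γ₂).symm.finrank_eq)
  set Γ₁ : Submodule ℚ ℝ := E 0 with hΓ₁
  have hΓ₁mem : ∀ x, x ∈ Γ₁ ↔ (x, (0 : ℝ)) ∈ Λ := by
    intro x
    have := hEmem 0 x
    rwa [zero_mul] at this
  haveI hΓ₁fin : FiniteDimensional ℚ Γ₁ := hEfin 0
  -- numeric facts
  have hxn : n ≤ 2 * Module.finrank ℚ Γ₁ := by
    have := (hmaximal _).mp hx
    rwa [hEfr 0] at this
  have hdn : n ≤ 2 * Module.finrank ℚ (E 1) := by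
    have := (hmaximal _).mp hdiag
    rwa [hEfr 1] at this
  have hyn : n ≤ 2 * Module.finrank ℚ Γ₂ := by
    have := (hmaximal _).mp hy
    rwa [hΓ₂fr] at this
  -- the sup
  have hf0 : Submodule.map (fslope 0) Γ₁ = Submodule.map (LinearMap.inl ℚ ℝ ℝ) Γ₁ := by
    ext p
    simp only [Submodule.mem_map, fslope_apply, zero_mul, LinearMap.coe_inl]
  set S : Submodule ℚ (ℝ × ℝ) :=
    Submodule.map (LinearMap.inl ℚ ℝ ℝ) Γ₁ ⊔ Submodule.map (LinearMap.inr ℚ ℝ ℝ) Γ₂ with hS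
  have hSle : S ≤ Λ := by
    apply sup_le
    · rw [← hf0]; exact hmapleE 0
    · exact hmapleΓ₂
  haveI hfin1 : FiniteDimensional ℚ (Submodule.map (LinearMap.inl ℚ ℝ ℝ) Γ₁) := by
    rw [← hf0]; exact Submodule.finiteDimensional_of_le (hmapleE 0)
  haveI hfin2 : FiniteDimensional ℚ (Submodule.map (LinearMap.inr ℚ ℝ ℝ) Γ₂) :=
    Submodule.finiteDimensional_of_le hmapleΓ₂
  have hinfbot : Submodule.map (LinearMap.inl ℚ ℝ ℝ) Γ₁ ⊓
      Submodule.map (LinearMap.inr ℚ ℝ ℝ) Γ₂ = ⊥ := by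
    rw [Submodule.eq_bot_iff]
    rintro p ⟨⟨x, -, rfl⟩, ⟨y, -, hy2⟩⟩
    have hx0 : x = 0 := by simpa using congrArg Prod.fst hy2.symm
    rw [hx0]
    simp
  have hSfr : Module.finrank ℚ S = Module.finrank ℚ Γ₁ + Module.finrank ℚ Γ₂ := by
    have h := Submodule.finrank_sup_add_finrank_inf_eq
      (Submodule.map (LinearMap.inl ℚ ℝ ℝ) Γ₁) (Submodule.map (LinearMap.inr ℚ ℝ ℝ) Γ₂)
    rw [hinfbot, finrank_bot, add_zero] at h
    rw [hS, h,
      ((Submodule.equivMapOfInjective _ hinlinj Γ₁).symm.finrank_eq),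
      ((Submodule.equivMapOfInjective _ hinrinj Γ₂).symm.finrank_eq)]
  have hSlen : Module.finrank ℚ S ≤ n := Submodule.finrank_mono hSle
  have hab : Module.finrank ℚ Γ₁ + Module.finrank ℚ Γ₂ ≤ n := by rwa [hSfr] at hSlen
  have heq : n = 2 * Module.finrank ℚ Γ₁ := by omega
  -- Λ = S
  have hΛS : S = Λ := Submodule.eq_of_le_of_finrank_le hSle (by rw [hSfr]; omega)
  have hmem : ∀ p : ℝ × ℝ, p ∈ Λ ↔ p.1 ∈ Γ₁ ∧ p.2 ∈ Γ₂ := by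
    intro p
    rw [← hΛS, hS, ← LinearMap.prod_eq_sup_map, Submodule.mem_prod]
  -- Γ₁ = Γ₂ via the diagonal
  have hE1le1 : E 1 ≤ Γ₁ := by
    intro x hx'
    rw [hEmem, one_mul] at hx'
    exact ((hmem _).mp hx').1
  have hE1le2 : E 1 ≤ Γ₂ := by
    intro x hx'
    rw [hEmem, one_mul] at hx'
    exact ((hmem _).mp hx').2
  haveI hE1fin : FiniteDimensional ℚ (E 1) := hEfin 1
  have hE1eq1 : E 1 = Γ₁ :=
    Submodule.eq_of_le_of_finrank_le hE1le1 (by omega)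
  have h2d : n ≤ 2 * Module.finrank ℚ (E 1) := hdn
  have hdfr : Module.finrank ℚ (E 1) ≤ Module.finrank ℚ Γ₂ := Submodule.finrank_mono hE1le2
  have hE1eq2 : E 1 = Γ₂ :=
    Submodule.eq_of_le_of_finrank_le hE1le2 (by omega)
  have hΓeq : Γ₁ = Γ₂ := hE1eq1 ▸ hE1eq2
  have hmem' : ∀ p : ℝ × ℝ, p ∈ Λ ↔ p.1 ∈ Γ₁ ∧ p.2 ∈ Γ₁ := by
    intro p
    rw [hmem, ← hΓeq]
  -- key equivalence for slopes
  have hkey : ∀ m : ℝ, maximal (Submodule.span ℝ {((1 : ℝ), m)}) ↔ (∀ v ∈ Λ, m • v ∈ Λ) := by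
    intro m
    haveI := hEfin m
    rw [hmaximal, hEfr m]
    constructor
    · intro hle
      have hEle : E m ≤ Γ₁ := by
        intro x hx'
        rw [hEmem] at hx'
        exact ((hmem' _).mp hx').1
      have hEeq : E m = Γ₁ :=
        Submodule.eq_of_le_of_finrank_le hEle (by omega)
      intro v hv
      rw [hmem'] at hv ⊢
      have c1 : v.1 ∈ E m := hEeq.symm ▸ hv.1
      have c2 : v.2 ∈ E m := hEeq.symm ▸ hv.2
      rw [hEmem] at c1 c2
      have e : m • v = (m * v.1, m * v.2) := rfl
      rw [e]
      exact ⟨((hmem' _).mp c1).2, ((hmem' _).mp c2).2⟩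
    · intro hk
      have hGle : Γ₁ ≤ E m := by
        intro x hx'
        have hxr : ((0:ℝ), x) ∈ Λ := by rw [hmem']; exact ⟨Submodule.zero_mem _, hx'⟩
        have hmx : ((0:ℝ), m * x) ∈ Λ := by
          have e : m • ((0:ℝ), x) = ((0:ℝ), m * x) := by ext <;> simp
          rw [← e]
          exact hk _ hxr
        rw [hEmem, hmem']
        exact ⟨hx', ((hmem' _).mp hmx).2⟩
      have : Module.finrank ℚ Γ₁ ≤ Module.finrank ℚ (E m) := Submodule.finrank_mono hGle
      omega
  refine ⟨Γ₁, hΓ₁fin, ?_, hmem', ?_⟩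
  · intro l hl x hx'
    have hxl : (x, (0:ℝ)) ∈ Λ := (hΓ₁mem x).mp hx'
    have hlx := hl _ hxl
    have e : l • (x, (0:ℝ)) = (l * x, (0:ℝ)) := by ext <;> simp
    rw [e] at hlx
    exact (hΓ₁mem _).mpr hlx
  · intro ℓ hℓ
    constructor
    · intro hmax
      have hne : ℓ ≠ ⊥ := by
        intro h
        rw [h, finrank_bot] at hℓ
        exact one_ne_zero hℓ.symm
      obtain ⟨v, hv, hv0⟩ := Submodule.exists_mem_ne_zero_of_ne_bot hne
      have hspan : Submodule.span ℝ {v} = ℓ := by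
        apply Submodule.eq_of_le_of_finrank_le
          ((Submodule.span_singleton_le_iff_mem v ℓ).mpr hv)
        rw [hℓ, finrank_span_singleton hv0]
      by_cases hva : v.1 = 0
      · left
        have hvb : v.2 ≠ 0 := by
          intro h
          exact hv0 (Prod.ext hva h)
        have hv' : v = v.2 • ((0:ℝ), (1:ℝ)) := by ext <;> simp [hva]
        rw [← hspan, hv', Submodule.span_singleton_smul_eq (isUnit_iff_ne_zero.mpr hvb)]
      · right
        set m := v.2 / v.1 with hm
        have hvm : v = v.1 • ((1:ℝ), m) := by
          ext
          · simp
          · simp only [Prod.smul_snd, smul_eq_mul, hm]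
            field_simp
        have hℓeq : ℓ = Submodule.span ℝ {((1:ℝ), m)} := by
          rw [← hspan, hvm, Submodule.span_singleton_smul_eq (isUnit_iff_ne_zero.mpr hva)]
        exact ⟨m, (hkey m).mp (hℓeq ▸ hmax), hℓeq⟩
    · rintro (rfl | ⟨m, hmk, rfl⟩)
      · exact hy
      · exact (hkey m).mpr hmk
end

section
/- Let A be an n×n matrix with rational entries, λ an eigenvalue of A with eigenvector u ∈ ℂⁿ, and v ∈ ℂⁿ an eigenvector of Aᵀ with eigenvalue λ. Suppose λ generates the number field K = ℚ(λ), and σ, τ : K(u₁,…,uₙ,v₁,…,vₙ) → ℂ are ring embeddings with σ(λ) ≠ τ(λ). Then ∑ᵢ σ(uᵢ)τ(vᵢ) = 0. -/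
/-- If u is an eigenvector of a rational matrix A with eigenvalue λ, v an
eigenvector of Aᵀ with eigenvalue λ, and σ, τ are embeddings into ℂ of a field
containing λ and all coordinates of u and v with σ(λ) ≠ τ(λ), then
∑ᵢ σ(uᵢ)τ(vᵢ) = 0. -/
theorem stmt5 (n : ℕ) (A : Matrix (Fin n) (Fin n) ℚ)
    (l : ℂ) (u v : Fin n → ℂ) (hu0 : u ≠ 0) (hv0 : v ≠ 0)
    (hAu : (A.map (fun q : ℚ => (q : ℂ))).mulVec u = l • u)
    (hAv : (A.map (fun q : ℚ => (q : ℂ))).transpose.mulVec v = l • v)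
    (F : Subfield ℂ) (hlF : l ∈ F) (huF : ∀ i, u i ∈ F) (hvF : ∀ i, v i ∈ F)
    (σ τ : F →+* ℂ) (hστ : σ ⟨l, hlF⟩ ≠ τ ⟨l, hlF⟩) :
    ∑ i, σ ⟨u i, huF i⟩ * τ ⟨v i, hvF i⟩ = 0 := by
  set lF : F := ⟨l, hlF⟩
  set uF : Fin n → F := fun i => ⟨u i, huF i⟩
  set vF : Fin n → F := fun i => ⟨v i, hvF i⟩
  -- the eigen-equations inside F
  have huEq : ∀ j, (∑ i, (A j i : F) * uF i) = lF * uF j := by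
    intro j
    apply Subtype.ext
    push_cast
    have := congrFun hAu j
    simpa [Matrix.mulVec, dotProduct, Matrix.map_apply] using this
  have hvEq : ∀ j, (∑ i, (A i j : F) * vF i) = lF * vF j := by
    intro j
    apply Subtype.ext
    push_cast
    have := congrFun hAv j
    simpa [Matrix.mulVec, dotProduct, Matrix.map_apply,
      Matrix.transpose_apply] using this
  have hσ : ∀ j, (∑ i, (A j i : ℂ) * σ (uF i)) = σ lF * σ (uF j) := by
    intro j
    have := congrArg σ (huEq j)
    simpa [map_sum, map_mul] using this
  have hτ : ∀ j, (∑ i, (A i j : ℂ) * τ (vF i)) = τ lF * τ (vF j) := by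
    intro j
    have := congrArg τ (hvEq j)
    simpa [map_sum, map_mul] using this
  set S : ℂ := ∑ i, σ (uF i) * τ (vF i) with hS
  have key : σ lF * S = τ lF * S := by
    calc σ lF * S = ∑ j, (∑ i, (A j i : ℂ) * σ (uF i)) * τ (vF j) := by
          rw [hS, Finset.mul_sum]
          exact Finset.sum_congr rfl fun j _ => by rw [hσ j]; ring
      _ = ∑ j, ∑ i, (A j i : ℂ) * σ (uF i) * τ (vF j) := by
          simp [Finset.sum_mul]
      _ = ∑ i, ∑ j, (A j i : ℂ) * σ (uF i) * τ (vF j) := Finset.sum_comm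
      _ = ∑ i, σ (uF i) * ∑ j, (A j i : ℂ) * τ (vF j) := by
          refine Finset.sum_congr rfl fun i _ => ?_
          rw [Finset.mul_sum]
          exact Finset.sum_congr rfl fun j _ => by ring
      _ = ∑ i, σ (uF i) * (τ lF * τ (vF i)) := by
          exact Finset.sum_congr rfl fun i _ => by rw [hτ i]
      _ = τ lF * S := by
          rw [hS, Finset.mul_sum]
          exact Finset.sum_congr rfl fun i _ => by ring
  have : (σ lF - τ lF) * S = 0 := by rw [sub_mul, key, sub_self]
  rcases mul_eq_zero.mp this with h | h
  · exact absurd (sub_eq_zero.mp h) hστ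
  · exact h
end

section
/- Let V, W be ℚ-vector subspaces of ℝ². Then, inside ℝ² ∧_ℚ ℝ², the intersection of the images of V ∧_ℚ V and W ∧_ℚ W equals the image of (V ∩ W) ∧_ℚ (V ∩ W). -/
open ExteriorAlgebra

/-- Inside ℝ² ∧_ℚ ℝ², the intersection of the images of V ∧_ℚ V and W ∧_ℚ W
equals the image of (V ∩ W) ∧_ℚ (V ∩ W). -/
theorem stmt11 (V W : Submodule ℚ (ℝ × ℝ)) :
    (Submodule.span ℚ
        {x : ExteriorAlgebra ℚ (ℝ × ℝ) | ∃ v ∈ V, ∃ w ∈ V, x = ι ℚ v * ι ℚ w}) ⊓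
      (Submodule.span ℚ
        {x : ExteriorAlgebra ℚ (ℝ × ℝ) | ∃ v ∈ W, ∃ w ∈ W, x = ι ℚ v * ι ℚ w}) =
    Submodule.span ℚ
      {x : ExteriorAlgebra ℚ (ℝ × ℝ) | ∃ v ∈ V ⊓ W, ∃ w ∈ V ⊓ W, x = ι ℚ v * ι ℚ w} := by
  apply le_antisymm
  · -- choose P: complement of (V ⊓ W) inside V
    obtain ⟨P', hP'⟩ := Submodule.exists_isCompl ((V ⊓ W).comap V.subtype)
    set P : Submodule ℚ (ℝ × ℝ) := P'.map V.subtype with hPdef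
    have hPV : P ≤ V := by
      rw [hPdef]; rintro x ⟨y, -, rfl⟩; exact y.2
    have hPsup : (V ⊓ W) ⊔ P = V := by
      have := congrArg (Submodule.map V.subtype) hP'.sup_eq_top
      rwa [Submodule.map_sup, Submodule.map_comap_eq, Submodule.map_subtype_top,
        Submodule.range_subtype, inf_eq_right.2 (inf_le_left : V ⊓ W ≤ V)] at this
    have hPW : P ⊓ W = ⊥ := by
      rw [eq_bot_iff]
      rintro x ⟨hxP, hxW⟩
      have hxVW : x ∈ (V ⊓ W : Submodule ℚ (ℝ × ℝ)) := ⟨hPV hxP, hxW⟩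
      obtain ⟨y, hy, rfl⟩ := hxP
      have : y ∈ P' ⊓ (V ⊓ W).comap V.subtype := ⟨hy, hxVW⟩
      rw [inf_comm, hP'.inf_eq_bot, Submodule.mem_bot] at this
      simp [this]
    -- choose D: complement of W ⊔ P, set C := P ⊔ D
    obtain ⟨D, hD⟩ := Submodule.exists_isCompl (W ⊔ P)
    have hC : IsCompl W (P ⊔ D) := by
      constructor
      · rw [disjoint_iff, eq_bot_iff]
        rintro x ⟨hxW, hxPD⟩
        obtain ⟨p, hp, d, hd, rfl⟩ := Submodule.mem_sup.1 hxPD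
        have hdWP : d ∈ W ⊔ P := by
          have : d = (p + d) - p := by ring
          rw [this]
          exact sub_mem (le_sup_left (a := W) (b := P) hxW)
            (le_sup_right (a := W) (b := P) hp)
        have hd0 : d = 0 := by
          have : d ∈ (W ⊔ P) ⊓ D := ⟨hdWP, hd⟩
          rwa [disjoint_iff.1 hD.disjoint, Submodule.mem_bot] at this
        subst hd0
        rw [add_zero] at hxW ⊢
        have : p ∈ P ⊓ W := ⟨hp, hxW⟩
        rwa [hPW, Submodule.mem_bot] at this
      · rw [codisjoint_iff, ← sup_assoc, eq_top_iff, ← hD.sup_eq_top]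
    -- projection onto W along P ⊔ D
    set g : (ℝ × ℝ) →ₗ[ℚ] (ℝ × ℝ) := W.subtype ∘ₗ W.projectionOnto (P ⊔ D) hC with hgdef
    have hgW : ∀ x ∈ W, g x = x := fun x hx => by
      simpa [hgdef] using congrArg W.subtype
        (Submodule.projectionOnto_apply_left hC ⟨x, hx⟩)
    have hgV : ∀ x ∈ V, g x ∈ V ⊓ W := by
      intro x hx
      rw [← hPsup] at hx
      obtain ⟨u, hu, p, hp, rfl⟩ := Submodule.mem_sup.1 hx
      have hgp : g p = 0 := by
        simp [hgdef, Submodule.projectionOnto_apply_of_mem_right hC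
          (le_sup_left (a := P) (b := D) hp)]
      have hgu : g u = u := hgW u hu.2
      rw [map_add, hgp, hgu, add_zero]
      exact hu
    set F := ExteriorAlgebra.map (R := ℚ) g with hFdef
    rintro x ⟨hxV, hxW⟩
    -- F fixes x (since x in W-span)
    have hfix : F x = x := by
      clear hxV
      induction hxW using Submodule.span_induction with
      | mem y hy =>
        obtain ⟨v, hv, w, hw, rfl⟩ := hy
        rw [hFdef, map_mul, map_apply_ι, map_apply_ι, hgW v hv, hgW w hw]
      | zero => simp
      | add a b _ _ ha hb => rw [map_add, ha, hb]
      | smul c a _ ha => rw [map_smul, ha]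
    -- F maps V-span into target
    have hmap : F x ∈ Submodule.span ℚ
        {x : ExteriorAlgebra ℚ (ℝ × ℝ) | ∃ v ∈ V ⊓ W, ∃ w ∈ V ⊓ W, x = ι ℚ v * ι ℚ w} := by
      clear hfix hxW
      induction hxV using Submodule.span_induction with
      | mem y hy =>
        obtain ⟨v, hv, w, hw, rfl⟩ := hy
        rw [hFdef, map_mul, map_apply_ι, map_apply_ι]
        exact Submodule.subset_span ⟨g v, hgV v hv, g w, hgV w hw, rfl⟩
      | zero => simp
      | add a b _ _ ha hb => rw [map_add]; exact add_mem ha hb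
      | smul c a _ ha => rw [map_smul]; exact Submodule.smul_mem _ _ ha
    rwa [hfix] at hmap
  · rw [le_inf_iff]
    constructor
    · apply Submodule.span_mono
      rintro x ⟨v, hv, w, hw, rfl⟩
      exact ⟨v, hv.1, w, hw.1, rfl⟩
    · apply Submodule.span_mono
      rintro x ⟨v, hv, w, hw, rfl⟩
      exact ⟨v, hv.2, w, hw.2, rfl⟩
end

section
/- Let α, β be elements of a group G ≤ SL(2,ℝ) with β of infinite order satisfying αβα⁻¹ = β⁴. Then β is parabolic (|trace(β)| = 2 and β ≠ ±I), and the fixed line (axis) of β is an eigenspace of α with eigenvalue of absolute value 2. -/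
/-- If α, β ∈ SL(2,ℝ), β has infinite order and αβα⁻¹ = β⁴, then β is parabolic
(trace ±2 and β ≠ ±I), and the axis of β is an eigenline of α whose eigenvalue μ
satisfies μ² = 4. -/
theorem stmt12 (α β : Matrix.SpecialLinearGroup (Fin 2) ℝ)
    (hord : ∀ n : ℕ, 0 < n → β ^ n ≠ 1)
    (hconj : α * β * α⁻¹ = β ^ 4) :
    ((β : Matrix (Fin 2) (Fin 2) ℝ).trace = 2 ∨
      (β : Matrix (Fin 2) (Fin 2) ℝ).trace = -2) ∧
    β ≠ 1 ∧ β ≠ -1 ∧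
    ∃ v : Fin 2 → ℝ, v ≠ 0 ∧
      ((β : Matrix (Fin 2) (Fin 2) ℝ).mulVec v = v ∨
        (β : Matrix (Fin 2) (Fin 2) ℝ).mulVec v = -v) ∧
      ∃ μ : ℝ, μ ^ 2 = 4 ∧ (α : Matrix (Fin 2) (Fin 2) ℝ).mulVec v = μ • v := by
  set M : Matrix (Fin 2) (Fin 2) ℝ := (β : Matrix (Fin 2) (Fin 2) ℝ) with hM
  set A : Matrix (Fin 2) (Fin 2) ℝ := (α : Matrix (Fin 2) (Fin 2) ℝ) with hA
  set t : ℝ := M.trace with ht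
  have hdet : M 0 0 * M 1 1 - M 0 1 * M 1 0 = 1 := by
    have : M.det = 1 := β.2
    rwa [Matrix.det_fin_two] at this
  -- Cayley–Hamilton
  have hCH : M * M = t • M - 1 := by
    ext i j
    fin_cases i <;> fin_cases j <;>
      simp [Matrix.mul_apply, Fin.sum_univ_two, Matrix.trace_fin_two, Matrix.one_apply, ht] <;>
      first | linear_combination -hdet | ring
  have h4 : M ^ 4 = (t^3 - 2*t) • M - (t^2-1) • 1 := by
    have e : M ^ 4 = (M*M) * (M*M) := by rw [show (4:ℕ) = 2+2 from rfl, pow_add, sq]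
    rw [e, hCH]
    simp only [sub_mul, mul_sub, smul_mul_assoc, mul_smul_comm, smul_smul, hCH, smul_sub,
      one_mul, mul_one]
    module
  have h5 : M ^ 5 = (t^4 - 3*t^2 + 1) • M - (t^3 - 2*t) • 1 := by
    have e : M ^ 5 = ((M*M) * (M*M)) * M := by
      rw [show (5:ℕ) = 2+2+1 from rfl, pow_add, pow_add, sq, pow_one]
    rw [e, hCH]
    simp only [sub_mul, mul_sub, smul_mul_assoc, mul_smul_comm, smul_smul, hCH, smul_sub,
      one_mul, mul_one]
    module
  have h3 : M ^ 3 = (t^2 - 1) • M - t • 1 := by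
    have e : M ^ 3 = (M*M) * M := by rw [show (3:ℕ) = 2+1 from rfl, pow_add, sq, pow_one]
    rw [e, hCH]
    simp only [sub_mul, mul_sub, smul_mul_assoc, mul_smul_comm, smul_smul, hCH, smul_sub,
      one_mul, mul_one]
    module
  -- group relation
  have hg : α * β = β ^ 4 * α := by rw [← hconj]; group
  have hAM : A * M = M ^ 4 * A := by
    have := congrArg (fun g : Matrix.SpecialLinearGroup (Fin 2) ℝ =>
      (g : Matrix (Fin 2) (Fin 2) ℝ)) hg
    simpa only [Matrix.SpecialLinearGroup.coe_mul, Matrix.SpecialLinearGroup.coe_pow, ← hM, ← hA]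
      using this
  -- trace equation
  have htr4 : (M ^ 4).trace = t := by
    have hconj' := congrArg (fun g : Matrix.SpecialLinearGroup (Fin 2) ℝ =>
      (g : Matrix (Fin 2) (Fin 2) ℝ)) hconj
    simp only [Matrix.SpecialLinearGroup.coe_mul, Matrix.SpecialLinearGroup.coe_pow, ← hM, ← hA]
      at hconj'
    have hA'A : ((α⁻¹ : Matrix.SpecialLinearGroup (Fin 2) ℝ) : Matrix (Fin 2) (Fin 2) ℝ) * A = 1 := by
      have h1 : ((α⁻¹ * α : Matrix.SpecialLinearGroup (Fin 2) ℝ) : Matrix (Fin 2) (Fin 2) ℝ)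
          = ((1 : Matrix.SpecialLinearGroup (Fin 2) ℝ) : Matrix (Fin 2) (Fin 2) ℝ) := by
        rw [inv_mul_cancel]
      rw [Matrix.SpecialLinearGroup.coe_mul, Matrix.SpecialLinearGroup.coe_one] at h1
      exact h1
    calc (M ^ 4).trace
        = (A * M * ((α⁻¹ : Matrix.SpecialLinearGroup (Fin 2) ℝ) : Matrix (Fin 2) (Fin 2) ℝ)).trace := by
          rw [hconj']
      _ = (((α⁻¹ : Matrix.SpecialLinearGroup (Fin 2) ℝ) : Matrix (Fin 2) (Fin 2) ℝ) * (A * M)).trace := by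
          rw [Matrix.trace_mul_comm]
      _ = t := by rw [← mul_assoc, hA'A, one_mul, ht]
  have heq : t^4 - 4*t^2 + 2 = t := by
    rw [h4, Matrix.trace_sub, Matrix.trace_smul, Matrix.trace_smul, Matrix.trace_one] at htr4
    simp only [smul_eq_mul, Fintype.card_fin, Nat.cast_ofNat, ← ht] at htr4
    linear_combination htr4
  have hpow_ne : ∀ n : ℕ, 0 < n → M ^ n ≠ 1 := by
    intro n hn h
    apply hord n hn
    have h2 : ((β ^ n : Matrix.SpecialLinearGroup (Fin 2) ℝ) : Matrix (Fin 2) (Fin 2) ℝ)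
        = ((1 : Matrix.SpecialLinearGroup (Fin 2) ℝ) : Matrix (Fin 2) (Fin 2) ℝ) := by
      rw [Matrix.SpecialLinearGroup.coe_pow, Matrix.SpecialLinearGroup.coe_one, ← hM]
      exact h
    exact Subtype.coe_injective h2
  have ht2 : t = 2 := by
    have hfac : (t - 2) * ((t + 1) * (t^2 + t - 1)) = 0 := by linear_combination heq
    rcases mul_eq_zero.mp hfac with h | h
    · linarith
    rcases mul_eq_zero.mp h with h | h
    · exfalso
      apply hpow_ne 3 (by norm_num)
      rw [h3, show t = -1 by linarith]
      norm_num
    · exfalso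
      apply hpow_ne 5 (by norm_num)
      rw [h5]
      rw [show t^4 - 3*t^2 + 1 = 0 by linear_combination (t^2 - t - 1) * h,
        show t^3 - 2*t = -1 by linear_combination (t - 1) * h]
      norm_num
  have hβ1 : β ≠ 1 := fun h => hord 1 one_pos (by simpa using h)
  have hβm1 : β ≠ -1 := by
    intro h
    apply hord 2 (by norm_num)
    rw [h, sq, neg_one_mul, neg_neg]
  refine ⟨Or.inl ht2, hβ1, hβm1, ?_⟩
  -- eigenvector part
  have hCH2 : M * M = (2:ℝ) • M - 1 := by rw [← ht2]; exact hCH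
  have h4' : M ^ 4 = (4:ℝ) • M - (3:ℝ) • 1 := by
    rw [h4, ht2]; norm_num
  set N : Matrix (Fin 2) (Fin 2) ℝ := M - 1 with hN
  have hN2 : N * N = 0 := by
    have e : N * N = M * M - M - M + 1 := by rw [hN]; noncomm_ring
    rw [e, hCH2]
    module
  have hAN : A * N = (4:ℝ) • (N * A) := by
    have e : A * N = M ^ 4 * A - A := by rw [hN, mul_sub, mul_one, hAM]
    rw [e, h4', hN]
    simp only [sub_mul, smul_mul_assoc, one_mul, smul_sub]
    module
  obtain ⟨b, hM01⟩ : ∃ x, M 0 1 = x := ⟨_, rfl⟩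
  obtain ⟨c, hM10⟩ : ∃ x, M 1 0 = x := ⟨_, rfl⟩
  obtain ⟨a, hM00⟩ : ∃ x, M 0 0 = x + 1 := ⟨M 0 0 - 1, by ring⟩
  have htr2 : M 0 0 + M 1 1 = 2 := by
    have h0 : M.trace = 2 := by rw [← ht, ht2]
    rwa [Matrix.trace_fin_two] at h0
  have hM11 : M 1 1 = 1 - a := by rw [hM00] at htr2; linarith
  have hN00 : N 0 0 = a := by
    rw [hN]; simp [Matrix.sub_apply, Matrix.one_apply, hM00]
  have hN01 : N 0 1 = b := by
    rw [hN]; simp [Matrix.sub_apply, Matrix.one_apply, hM01]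
  have hN10 : N 1 0 = c := by
    rw [hN]; simp [Matrix.sub_apply, Matrix.one_apply, hM10]
  have hN11 : N 1 1 = -a := by
    rw [hN]; simp [Matrix.sub_apply, Matrix.one_apply, hM11]; try ring
  have hdN : a * a + b * c = 0 := by
    have h0 := congrFun (congrFun hN2 0) 0
    simpa [Matrix.mul_apply, Fin.sum_univ_two, hN00, hN01, hN10, mul_comm] using h0
  obtain ⟨p, hA00⟩ : ∃ x, A 0 0 = x := ⟨_, rfl⟩
  obtain ⟨q, hA01⟩ : ∃ x, A 0 1 = x := ⟨_, rfl⟩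
  obtain ⟨r, hA10⟩ : ∃ x, A 1 0 = x := ⟨_, rfl⟩
  obtain ⟨s, hA11⟩ : ∃ x, A 1 1 = x := ⟨_, rfl⟩
  have hdetA : p * s - q * r = 1 := by
    have h0 : A.det = 1 := α.2
    rwa [Matrix.det_fin_two, hA00, hA01, hA10, hA11] at h0
  have E1 : p * a + q * c = 4 * (a * p + b * r) := by
    have h0 := congrFun (congrFun hAN 0) 0
    simp only [Matrix.mul_apply, Fin.sum_univ_two, Matrix.smul_apply, smul_eq_mul,
      hN00, hN01, hN10, hN11, hA00, hA01, hA10, hA11] at h0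
    linarith [h0]
  have E2 : p * b - q * a = 4 * (a * q + b * s) := by
    have h0 := congrFun (congrFun hAN 0) 1
    simp only [Matrix.mul_apply, Fin.sum_univ_two, Matrix.smul_apply, smul_eq_mul,
      hN00, hN01, hN10, hN11, hA00, hA01, hA10, hA11] at h0
    linarith [h0]
  have E3 : r * a + s * c = 4 * (c * p - a * r) := by
    have h0 := congrFun (congrFun hAN 1) 0
    simp only [Matrix.mul_apply, Fin.sum_univ_two, Matrix.smul_apply, smul_eq_mul,
      hN00, hN01, hN10, hN11, hA00, hA01, hA10, hA11] at h0
    linarith [h0]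
  have E4 : r * b - s * a = 4 * (c * q - a * s) := by
    have h0 := congrFun (congrFun hAN 1) 1
    simp only [Matrix.mul_apply, Fin.sum_univ_two, Matrix.smul_apply, smul_eq_mul,
      hN00, hN01, hN10, hN11, hA00, hA01, hA10, hA11] at h0
    linarith [h0]
  by_cases hbz : b = 0
  · -- then a = 0 and c ≠ 0
    have haz : a = 0 := by
      have h0 : a * a = 0 := by rw [hbz] at hdN; linarith
      exact mul_self_eq_zero.mp h0
    have hcz : c ≠ 0 := by
      intro hc0
      apply hβ1
      apply Subtype.coe_injective
      show M = ((1 : Matrix.SpecialLinearGroup (Fin 2) ℝ) : Matrix (Fin 2) (Fin 2) ℝ)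
      rw [Matrix.SpecialLinearGroup.coe_one]
      ext i j
      fin_cases i <;> fin_cases j <;>
        simp [hM00, hM01, hM10, hM11, haz, hbz, hc0, Matrix.one_apply]
    have hq0 : q = 0 := by
      have h1 : q * c = 0 := by rw [haz, hbz] at E1; linarith
      rcases mul_eq_zero.mp h1 with h' | h'
      · exact h'
      · exact absurd h' hcz
    refine ⟨![0, 1], ?_, Or.inl ?_, s, ?_, ?_⟩
    · intro h
      have h1 := congrFun h 1
      simp at h1
    · funext i
      fin_cases i <;>
        simp [Matrix.mulVec, dotProduct, Fin.sum_univ_two, hM00, hM01, hM10, hM11,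
          haz, hbz]
    · -- s ^ 2 = 4
      have hsp : c * (s - 4 * p) = 0 := by rw [haz] at E3; linarith
      rcases mul_eq_zero.mp hsp with h' | h'
      · exact absurd h' hcz
      · have hs4p : s = 4 * p := by linarith
        have hps : p * s = 1 := by rw [hq0] at hdetA; linarith
        linear_combination s * hs4p + 4 * hps
    · funext i
      fin_cases i <;>
        simp [Matrix.mulVec, dotProduct, Fin.sum_univ_two, hA00, hA01, hA10, hA11,
          Pi.smul_apply, smul_eq_mul, hq0]
  · refine ⟨![b, -a], ?_, Or.inl ?_, (p * b - q * a) / b, ?_, ?_⟩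
    · intro h
      have h0 := congrFun h 0
      simp at h0
      exact hbz h0
    · funext i
      fin_cases i <;>
        simp [Matrix.mulVec, dotProduct, Fin.sum_univ_two, hM00, hM01, hM10, hM11,
          mul_neg]
      · ring
      · linear_combination hdN
    · field_simp
      linear_combination (p*b + 3*a*q) * E2 + 4*b*q * E4 + 16*q^2 * hdN + 4*b^2 * hdetA
    · funext i
      fin_cases i <;>
        simp [Matrix.mulVec, dotProduct, Fin.sum_univ_two, hA00, hA01, hA10, hA11,
          mul_neg, Pi.smul_apply, smul_eq_mul]
      · field_simp; ring
      · field_simp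
        linear_combination b * E1 + 4*a * E2 + 5*b * E4 + 19*q * hdN
end
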